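/- arXiv:2102.08340 — 9 statements merged into one kernel-verified Lean document; each statement's English description precedes it below -/
import Mathlib

section
/- Let 1 ≤ p ≤ n and m ≥ n − p. Let A be a real p×n matrix and C a real m×n matrix such that C has rank n − p and ker A ∩ ker C = {0} (equivalently, the (p+m)×n matrix obtained by stacking A over C has rank n). Let Q be a real symmetric positive definite p×p matrix and R a real symmetric positive definite m×m matrix. Then the n×n matrix P := Aᵀ·Q·A + Cᵀ·R·C is symmetric positive definite and satisfies A·P⁻¹·Aᵀ = Q⁻¹. -/
/-!
Positivity of `P` is read off its quadratic form `vᵀPv = (Av)ᵀQ(Av) + (Cv)ᵀR(Cv)`. For the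
identity, `ker C` has dimension `p` and `A` is injective on it, so every `y` is `A v` with
`C v = 0`; for such `v` we have `P v = Aᵀ Q y`, hence `A P⁻¹ Aᵀ Q y = y`.
-/

open Matrix

namespace Matrix

section Field

variable {K : Type*} [Field K] {m n p : Type*} [Fintype n] [Fintype p]

theorem exists_mulVec_eq_zero_and_mulVec_eq (A : Matrix p n K) (C : Matrix m n K)
    (hC : C.rank + Fintype.card p = Fintype.card n)
    (hker : ∀ v, A *ᵥ v = 0 → C *ᵥ v = 0 → v = 0) (y : p → K) :
    ∃ v, C *ᵥ v = 0 ∧ A *ᵥ v = y := by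
  set f := A.mulVecLin ∘ₗ (LinearMap.ker C.mulVecLin).subtype
  have hf : Function.Injective f := by
    rw [← LinearMap.ker_eq_bot, eq_bot_iff]
    rintro ⟨v, hCv⟩ hAv
    exact Subtype.ext (hker v hAv hCv)
  have hdim : Module.finrank K (LinearMap.ker C.mulVecLin) = Module.finrank K (p → K) := by
    have hrank := LinearMap.finrank_range_add_finrank_ker C.mulVecLin
    simp only [Module.finrank_fintype_fun_eq_card] at hrank ⊢
    change C.rank + _ = _ at hrank
    omega
  obtain ⟨⟨v, hCv⟩, hAv⟩ := (LinearMap.injective_iff_surjective_of_finrank_eq_finrank hdim).1 hf y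
  exact ⟨v, hCv, hAv⟩

variable [Fintype m]

theorem transpose_mul_mul_add_mulVec (A : Matrix p n K) (C : Matrix m n K) (Q : Matrix p p K)
    (R : Matrix m m K) (v : n → K) :
    (Aᵀ * Q * A + Cᵀ * R * C) *ᵥ v = Aᵀ *ᵥ (Q *ᵥ (A *ᵥ v)) + Cᵀ *ᵥ (R *ᵥ (C *ᵥ v)) := by
  simp only [add_mulVec, mulVec_mulVec, Matrix.mul_assoc]

theorem dotProduct_transpose_mul_mul_add_mulVec (A : Matrix p n K) (C : Matrix m n K)
    (Q : Matrix p p K) (R : Matrix m m K) (v : n → K) :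
    v ⬝ᵥ ((Aᵀ * Q * A + Cᵀ * R * C) *ᵥ v)
      = (A *ᵥ v) ⬝ᵥ (Q *ᵥ (A *ᵥ v)) + (C *ᵥ v) ⬝ᵥ (R *ᵥ (C *ᵥ v)) := by
  rw [transpose_mul_mul_add_mulVec, dotProduct_add, dotProduct_mulVec v Aᵀ, vecMul_transpose,
    dotProduct_mulVec v Cᵀ, vecMul_transpose]

theorem mul_inv_mul_transpose_eq_inv [DecidableEq n] [DecidableEq p]
    (A : Matrix p n K) (C : Matrix m n K) (Q : Matrix p p K) (R : Matrix m m K)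
    (hC : C.rank + Fintype.card p = Fintype.card n)
    (hker : ∀ v, A *ᵥ v = 0 → C *ᵥ v = 0 → v = 0)
    (hP : IsUnit (Aᵀ * Q * A + Cᵀ * R * C)) :
    A * (Aᵀ * Q * A + Cᵀ * R * C)⁻¹ * Aᵀ = Q⁻¹ := by
  set P := Aᵀ * Q * A + Cᵀ * R * C
  refine (inv_eq_left_inv <| ext_iff_mulVec.2 fun y => ?_).symm
  obtain ⟨v, hCv, rfl⟩ := exists_mulVec_eq_zero_and_mulVec_eq A C hC hker y
  have hPv : P *ᵥ v = Aᵀ *ᵥ (Q *ᵥ (A *ᵥ v)) := by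
    simp [P, transpose_mul_mul_add_mulVec, hCv]
  rw [one_mulVec, ← mulVec_mulVec, ← mulVec_mulVec, ← mulVec_mulVec, ← hPv, mulVec_mulVec _ P⁻¹,
    nonsing_inv_mul _ ((isUnit_iff_isUnit_det P).1 hP), one_mulVec]

end Field

theorem posDef_transpose_mul_mul_add {m n p : Type*} [Fintype m] [Fintype n] [Fintype p]
    (A : Matrix p n ℝ) (C : Matrix m n ℝ) {Q : Matrix p p ℝ} {R : Matrix m m ℝ}
    (hQ : Q.PosDef) (hR : R.PosDef) (hker : ∀ v, A *ᵥ v = 0 → C *ᵥ v = 0 → v = 0) :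
    (Aᵀ * Q * A + Cᵀ * R * C).PosDef := by
  refine PosDef.of_dotProduct_mulVec_pos ?_ fun v hv => ?_
  · simpa only [conjTranspose_eq_transpose_of_trivial] using
      (isHermitian_conjTranspose_mul_mul A hQ.1).add (isHermitian_conjTranspose_mul_mul C hR.1)
  rw [star_trivial, dotProduct_transpose_mul_mul_add_mulVec]
  have hQv := hQ.posSemidef.dotProduct_mulVec_nonneg (A *ᵥ v)
  have hRv := hR.posSemidef.dotProduct_mulVec_nonneg (C *ᵥ v)
  rw [star_trivial] at hQv hRv
  rcases eq_or_ne (A *ᵥ v) 0 with hAv | hAv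
  · have hCv : C *ᵥ v ≠ 0 := fun hCv => hv (hker v hAv hCv)
    exact add_pos_of_nonneg_of_pos hQv (by simpa using hR.dotProduct_mulVec_pos hCv)
  · exact add_pos_of_pos_of_nonneg (by simpa using hQ.dotProduct_mulVec_pos hAv) hRv

end Matrix

theorem stmt_1_general {n p m : ℕ} (hpn : p ≤ n)
    (A : Matrix (Fin p) (Fin n) ℝ) (C : Matrix (Fin m) (Fin n) ℝ)
    (hC : C.rank = n - p)
    (hker : ∀ v : Fin n → ℝ, A.mulVec v = 0 → C.mulVec v = 0 → v = 0)
    (Q : Matrix (Fin p) (Fin p) ℝ) (hQ : Q.PosDef)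
    (R : Matrix (Fin m) (Fin m) ℝ) (hR : R.PosDef) :
    (Aᵀ * Q * A + Cᵀ * R * C).IsSymm ∧ (Aᵀ * Q * A + Cᵀ * R * C).PosDef ∧
      A * (Aᵀ * Q * A + Cᵀ * R * C)⁻¹ * Aᵀ = Q⁻¹ := by
  have hP := posDef_transpose_mul_mul_add A C hQ hR hker
  have hdim : C.rank + Fintype.card (Fin p) = Fintype.card (Fin n) := by
    rw [hC, Fintype.card_fin, Fintype.card_fin]
    omega
  exact ⟨isHermitian_iff_isSymm.1 hP.isHermitian, hP,
    mul_inv_mul_transpose_eq_inv A C Q R hdim hker hP.isUnit⟩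

/-- If `A` is `p×n`, `C` is `m×n` with rank `n − p`, their kernels intersect trivially
(i.e. the stacked matrix has rank `n`), and `Q`, `R` are symmetric positive definite, then
`P := Aᵀ·Q·A + Cᵀ·R·C` is symmetric positive definite and `A·P⁻¹·Aᵀ = Q⁻¹`. -/
theorem stmt_1 {n p m : ℕ} (hp1 : 1 ≤ p) (hpn : p ≤ n) (hm : n - p ≤ m)
    (A : Matrix (Fin p) (Fin n) ℝ) (C : Matrix (Fin m) (Fin n) ℝ)
    (hC : C.rank = n - p)
    (hker : ∀ v : Fin n → ℝ, A.mulVec v = 0 → C.mulVec v = 0 → v = 0)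
    (Q : Matrix (Fin p) (Fin p) ℝ) (hQsym : Q.IsSymm) (hQ : Q.PosDef)
    (R : Matrix (Fin m) (Fin m) ℝ) (hRsym : R.IsSymm) (hR : R.PosDef) :
    (Aᵀ * Q * A + Cᵀ * R * C).IsSymm ∧ (Aᵀ * Q * A + Cᵀ * R * C).PosDef ∧
      A * (Aᵀ * Q * A + Cᵀ * R * C)⁻¹ * Aᵀ = Q⁻¹ :=
  stmt_1_general hpn A C hC hker Q hQ R hR
end

section
/- Let P be a real symmetric positive definite n×n matrix, H a real p×n matrix of rank p (1 ≤ p ≤ n), and Q a real symmetric positive definite p×p matrix. Then P_mod := P + Hᵀ·(Q − (H·P⁻¹·Hᵀ)⁻¹)·H is symmetric positive definite and satisfies H·P_mod⁻¹·Hᵀ = Q⁻¹. -/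
/-!
Write `S := H P⁻¹ Hᵀ`, invertible because `H` has full row rank. Then
`P_mod = (P - Hᵀ S⁻¹ H) + Hᵀ Q H`. The first summand `M` satisfies `M P⁻¹ M = M`, so it is a
congruence of `P⁻¹` and hence positive semidefinite; on `ker H` it acts as `P`. The second summand
is positive definite off `ker H`, so `P_mod` is positive definite.
For the identity, `P_mod (P⁻¹ Hᵀ) = Hᵀ Q S`, hence `P_mod⁻¹ Hᵀ = P⁻¹ Hᵀ S⁻¹ Q⁻¹` and
`H P_mod⁻¹ Hᵀ = S S⁻¹ Q⁻¹ = Q⁻¹`.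
-/

open Matrix
open scoped ComplexOrder

namespace Matrix

variable {m n 𝕜 : Type*} [Fintype m] [Fintype n]

theorem linearIndependent_row_of_rank_eq_card [Field 𝕜] {A : Matrix m n 𝕜}
    (hA : A.rank = Fintype.card m) : LinearIndependent 𝕜 A.row := by
  rw [linearIndependent_iff_card_eq_finrank_span, Set.finrank, ← rank_eq_finrank_span_row, hA]

variable [DecidableEq m] [DecidableEq n]

noncomputable def modifiedMetric [CommRing 𝕜] [StarRing 𝕜] (P : Matrix n n 𝕜) (H : Matrix m n 𝕜)
    (Q : Matrix m m 𝕜) : Matrix n n 𝕜 :=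
  P + Hᴴ * (Q - (H * P⁻¹ * Hᴴ)⁻¹) * H

theorem mul_modifiedMetric_inv_mul_conjTranspose [CommRing 𝕜] [StarRing 𝕜]
    {P : Matrix n n 𝕜} {H : Matrix m n 𝕜} {Q : Matrix m m 𝕜} (hP : IsUnit P.det)
    (hS : IsUnit (H * P⁻¹ * Hᴴ).det) (hQ : IsUnit Q.det)
    (hPmod : IsUnit (modifiedMetric P H Q).det) :
    H * (modifiedMetric P H Q)⁻¹ * Hᴴ = Q⁻¹ := by
  have hmul : modifiedMetric P H Q * (P⁻¹ * Hᴴ) = Hᴴ * Q * (H * P⁻¹ * Hᴴ) := by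
    rw [modifiedMetric, Matrix.add_mul, mul_nonsing_inv_cancel_left _ _ hP, Matrix.mul_assoc _ H,
      ← Matrix.mul_assoc H, Matrix.mul_assoc Hᴴ, Matrix.sub_mul, nonsing_inv_mul _ hS,
      Matrix.mul_sub, Matrix.mul_one, ← Matrix.mul_assoc]
    abel
  generalize hSdef : H * P⁻¹ * Hᴴ = S at hS hmul
  calc H * (modifiedMetric P H Q)⁻¹ * Hᴴ
      = H * ((modifiedMetric P H Q)⁻¹ * (Hᴴ * Q * S)) * S⁻¹ * Q⁻¹ := by
        simp only [Matrix.mul_assoc, mul_nonsing_inv_cancel_left _ _ hS, mul_nonsing_inv _ hQ,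
          Matrix.mul_one]
    _ = Q⁻¹ := by
        rw [← hmul, nonsing_inv_mul_cancel_left _ _ hPmod, ← Matrix.mul_assoc, hSdef,
          mul_nonsing_inv _ hS, Matrix.one_mul]

variable [RCLike 𝕜]

theorem PosDef.posSemidef_sub_conjTranspose_mul_inv_mul {P : Matrix n n 𝕜} (hP : P.PosDef)
    {H : Matrix m n 𝕜} (hS : IsUnit (H * P⁻¹ * Hᴴ).det) :
    (P - Hᴴ * (H * P⁻¹ * Hᴴ)⁻¹ * H).PosSemidef := by
  have hSh : (H * P⁻¹ * Hᴴ)⁻¹ᴴ = (H * P⁻¹ * Hᴴ)⁻¹ :=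
    (isHermitian_mul_mul_conjTranspose H hP.inv.isHermitian).inv.eq
  have hSX (X : Matrix m n 𝕜) : H * (P⁻¹ * (Hᴴ * X)) = H * P⁻¹ * Hᴴ * X := by
    simp only [Matrix.mul_assoc]
  generalize hSdef : H * P⁻¹ * Hᴴ = S at hS hSh hSX
  have hKh : (Hᴴ * S⁻¹ * H)ᴴ = Hᴴ * S⁻¹ * H := by
    rw [conjTranspose_mul, conjTranspose_mul, conjTranspose_conjTranspose, hSh, Matrix.mul_assoc]
  have hKPK : Hᴴ * S⁻¹ * H * P⁻¹ * (Hᴴ * S⁻¹ * H) = Hᴴ * S⁻¹ * H := by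
    simp only [Matrix.mul_assoc, hSX, nonsing_inv_mul_cancel_left _ _ hS]
  have hMPM : (P - Hᴴ * S⁻¹ * H)ᴴ * P⁻¹ * (P - Hᴴ * S⁻¹ * H) = P - Hᴴ * S⁻¹ * H := by
    have hPdet : IsUnit P.det := (isUnit_iff_isUnit_det P).mp hP.isUnit
    rw [conjTranspose_sub, hKh, hP.isHermitian.eq]
    simp only [Matrix.sub_mul, Matrix.mul_sub, mul_nonsing_inv _ hPdet, Matrix.one_mul,
      nonsing_inv_mul_cancel_right _ _ hPdet, hKPK]
    abel
  rw [← hMPM]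
  exact hP.inv.posSemidef.conjTranspose_mul_mul_same _

theorem PosDef.modifiedMetric {P : Matrix n n 𝕜} (hP : P.PosDef) {H : Matrix m n 𝕜}
    (hS : IsUnit (H * P⁻¹ * Hᴴ).det) {Q : Matrix m m 𝕜} (hQ : Q.PosDef) :
    (Matrix.modifiedMetric P H Q).PosDef := by
  have hM := hP.posSemidef_sub_conjTranspose_mul_inv_mul hS
  have hdecomp : Matrix.modifiedMetric P H Q = (P - Hᴴ * (H * P⁻¹ * Hᴴ)⁻¹ * H) + Hᴴ * Q * H := by
    rw [Matrix.modifiedMetric, Matrix.mul_sub, Matrix.sub_mul]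
    abel
  rw [hdecomp]
  refine .of_dotProduct_mulVec_pos
    (hM.isHermitian.add (isHermitian_conjTranspose_mul_mul H hQ.isHermitian)) fun x hx => ?_
  have hHQH : star x ⬝ᵥ ((Hᴴ * Q * H) *ᵥ x) = star (H *ᵥ x) ⬝ᵥ (Q *ᵥ (H *ᵥ x)) := by
    rw [← mulVec_mulVec, ← mulVec_mulVec, dotProduct_mulVec, star_mulVec]
  rw [add_mulVec, dotProduct_add, hHQH]
  by_cases hHx : H *ᵥ x = 0
  · rw [hHx, mulVec_zero, dotProduct_zero, add_zero, sub_mulVec, ← mulVec_mulVec, hHx,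
      mulVec_zero, sub_zero]
    exact hP.dotProduct_mulVec_pos hx
  · exact add_pos_of_nonneg_of_pos (hM.dotProduct_mulVec_nonneg x) (hQ.dotProduct_mulVec_pos hHx)

end Matrix

theorem stmt_3_general {n p : ℕ}
    (P : Matrix (Fin n) (Fin n) ℝ) (hP : P.PosDef)
    (H : Matrix (Fin p) (Fin n) ℝ) (hH : H.rank = p)
    (Q : Matrix (Fin p) (Fin p) ℝ) (hQ : Q.PosDef) :
    (P + Hᵀ * (Q - (H * P⁻¹ * Hᵀ)⁻¹) * H).IsSymm ∧
      (P + Hᵀ * (Q - (H * P⁻¹ * Hᵀ)⁻¹) * H).PosDef ∧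
      H * (P + Hᵀ * (Q - (H * P⁻¹ * Hᵀ)⁻¹) * H)⁻¹ * Hᵀ = Q⁻¹ := by
  have hPmod : P + Hᵀ * (Q - (H * P⁻¹ * Hᵀ)⁻¹) * H = modifiedMetric P H Q := by
    rw [modifiedMetric, conjTranspose_eq_transpose_of_trivial]
  have hHinj : Function.Injective H.vecMul :=
    vecMul_injective_iff.mpr (linearIndependent_row_of_rank_eq_card (by rwa [Fintype.card_fin]))
  have hS : IsUnit (H * P⁻¹ * Hᴴ).det :=
    (isUnit_iff_isUnit_det _).mp (hP.inv.mul_mul_conjTranspose_same hHinj).isUnit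
  have hPmodPD : (modifiedMetric P H Q).PosDef := hP.modifiedMetric hS hQ
  rw [hPmod, ← conjTranspose_eq_transpose_of_trivial H]
  exact ⟨isHermitian_iff_isSymm.mp hPmodPD.isHermitian, hPmodPD,
    mul_modifiedMetric_inv_mul_conjTranspose ((isUnit_iff_isUnit_det _).mp hP.isUnit) hS
      ((isUnit_iff_isUnit_det _).mp hQ.isUnit) ((isUnit_iff_isUnit_det _).mp hPmodPD.isUnit)⟩

/-- For `P` symmetric positive definite `n×n`, `H` a `p×n` matrix of rank `p`, and `Q`
symmetric positive definite `p×p`, the matrix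
`P_mod := P + Hᵀ·(Q − (H·P⁻¹·Hᵀ)⁻¹)·H` is symmetric positive definite and satisfies
`H·P_mod⁻¹·Hᵀ = Q⁻¹`. -/
theorem stmt_3 {n p : ℕ} (hp1 : 1 ≤ p) (hpn : p ≤ n)
    (P : Matrix (Fin n) (Fin n) ℝ) (hPsym : P.IsSymm) (hP : P.PosDef)
    (H : Matrix (Fin p) (Fin n) ℝ) (hH : H.rank = p)
    (Q : Matrix (Fin p) (Fin p) ℝ) (hQsym : Q.IsSymm) (hQ : Q.PosDef) :
    (P + Hᵀ * (Q - (H * P⁻¹ * Hᵀ)⁻¹) * H).IsSymm ∧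
      (P + Hᵀ * (Q - (H * P⁻¹ * Hᵀ)⁻¹) * H).PosDef ∧
      H * (P + Hᵀ * (Q - (H * P⁻¹ * Hᵀ)⁻¹) * H)⁻¹ * Hᵀ = Q⁻¹ :=
  stmt_3_general P hP H hH Q hQ
end

section
/- Let 1 ≤ n ≤ m and p ≥ 1, and write points of ℝᵐ as (x, x_e) ∈ ℝⁿ × ℝ^{m−n}. Let f_x: ℝᵐ → ℝⁿ, f_e: ℝᵐ → ℝ^{m−n} and h_a: ℝᵐ → ℝᵖ be C¹ with f_e(x, 0) = 0 for all x ∈ ℝⁿ, and define f: ℝⁿ → ℝⁿ by f(x) = f_x(x, 0) and h: ℝⁿ → ℝᵖ by h(x) = h_a(x, 0). Let P_a be a C¹ map from ℝᵐ to the real symmetric positive definite m×m matrices and write f_a = (f_x, f_e): ℝᵐ → ℝᵐ. Assume there exists q_a > 0 such that for every (x, x_e) ∈ ℝᵐ and every w ∈ ℝᵐ with Dh_a(x, x_e)·w = 0, one has (1/2)·(the directional derivative at (x, x_e) of the function (x′, x_e′) ↦ wᵀ·P_a(x′, x_e′)·w in the direction f_a(x, x_e)) + wᵀ·P_a(x,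 x_e)·Df_a(x, x_e)·w ≤ −q_a·wᵀ·P_a(x, x_e)·w. Define P(x) as the upper-left n×n block of P_a(x, 0). Then P(x) is symmetric positive definite for every x, and for every x ∈ ℝⁿ and every v ∈ ℝⁿ with Dh(x)·v = 0: (1/2)·(the directional derivative at x of the function x′ ↦ vᵀ·P(x′)·v in the direction f(x)) + vᵀ·P(x)·Df(x)·v ≤ −q_a·vᵀ·P(x)·v. -/
/-!
Embed `ℝⁿ` into the augmented state space as the invariant slice `x ↦ (x, 0)`. The block `P(x)` is
the restriction of the quadratic form `P_a(x, 0)` to this slice, so it stays symmetric positive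
definite, and every ingredient of the restricted inequality is the corresponding augmented one
evaluated at `z = (x, 0)`, `w = (v, 0)`: the chain rule turns `Dh(x) v` into `Dh_a(z) w` and the
derivative of `P` along `f(x)` into that of `P_a` along `f_a(z)`, because `f_e` vanishes on the
slice; for the same reason `Df_e(z) w = 0`, so `Df_a(z) w = (Df(x) v, 0)`.
-/

open Matrix

section Calculus

variable {𝕜 : Type*} [NontriviallyNormedField 𝕜]
  {E F G : Type*} [NormedAddCommGroup E] [NormedSpace 𝕜 E] [NormedAddCommGroup F] [NormedSpace 𝕜 F]
  [NormedAddCommGroup G] [NormedSpace 𝕜 G]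

noncomputable def Sum.elimZeroRightCLM {ι κ : Type*} [Fintype ι] [Fintype κ] :
    (ι → 𝕜) →L[𝕜] (ι ⊕ κ → 𝕜) :=
  ⟨Sum.elimZeroRight, continuous_pi fun i => by cases i <;> simp <;> fun_prop⟩

theorem fderiv_comp_sumElim_zero_apply {ι κ : Type*} [Fintype ι] [Fintype κ]
    {g : (ι ⊕ κ → 𝕜) → G} {x : ι → 𝕜} (hg : DifferentiableAt 𝕜 g (Sum.elim x 0)) (v : ι → 𝕜) :
    fderiv 𝕜 (fun x' => g (Sum.elim x' 0)) x v = fderiv 𝕜 g (Sum.elim x 0) (Sum.elim v 0) :=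
  congrArg (· v) (hg.hasFDerivAt.comp x (Sum.elimZeroRightCLM (κ := κ)).hasFDerivAt).fderiv

theorem fderiv_sumElim_apply {ι κ : Type*} [Fintype ι] [Fintype κ]
    {f : E → ι → F} {g : E → κ → F} {x : E}
    (hf : DifferentiableAt 𝕜 f x) (hg : DifferentiableAt 𝕜 g x) (w : E) :
    fderiv 𝕜 (fun z => Sum.elim (f z) (g z)) x w = Sum.elim (fderiv 𝕜 f x w) (fderiv 𝕜 g x w) := by
  rw [fderiv_pi (φ := fun i z => Sum.elim (f z) (g z) i)]
  · ext (a | b) <;> simp [fderiv_apply hf, fderiv_apply hg]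
  · rintro (a | b)
    · exact differentiableAt_pi.1 hf a
    · exact differentiableAt_pi.1 hg b

theorem Matrix.differentiable_dotProduct_mulVec {ι : Type*} [Fintype ι] {P : E → Matrix ι ι 𝕜}
    (hP : ∀ i j, Differentiable 𝕜 fun z => P z i j) (w : ι → 𝕜) :
    Differentiable 𝕜 fun z => w ⬝ᵥ P z *ᵥ w := by
  simp only [dotProduct, mulVec]
  fun_prop

end Calculus

theorem Matrix.sumElim_zero_dotProduct_mulVec_sumElim_zero {ι κ R : Type*} [Fintype ι] [Fintype κ]
    [CommSemiring R] (A : Matrix (ι ⊕ κ) (ι ⊕ κ) R) (v u : ι → R) :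
    Sum.elim v 0 ⬝ᵥ A *ᵥ Sum.elim u 0 = v ⬝ᵥ A.toBlocks₁₁ *ᵥ u := by
  simp [dotProduct, mulVec, Fintype.sum_sum_type, toBlocks₁₁]

theorem stmt_10_general {n k p : ℕ}
    (fx : ((Fin n ⊕ Fin k) → ℝ) → (Fin n → ℝ))
    (fe : ((Fin n ⊕ Fin k) → ℝ) → (Fin k → ℝ))
    (ha : ((Fin n ⊕ Fin k) → ℝ) → (Fin p → ℝ))
    (hfx : ContDiff ℝ 1 fx) (hfe : ContDiff ℝ 1 fe) (hha : ContDiff ℝ 1 ha)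
    (hfe0 : ∀ x : Fin n → ℝ, fe (Sum.elim x (0 : Fin k → ℝ)) = 0)
    (Pa : ((Fin n ⊕ Fin k) → ℝ) → Matrix (Fin n ⊕ Fin k) (Fin n ⊕ Fin k) ℝ)
    (hPac : ∀ a b, ContDiff ℝ 1 fun z => Pa z a b)
    (hPasym : ∀ z, (Pa z).IsSymm) (hPapos : ∀ z, (Pa z).PosDef)
    (qa : ℝ)
    (hyp : ∀ (z w : (Fin n ⊕ Fin k) → ℝ), fderiv ℝ ha z w = 0 →
      (1 / 2) * fderiv ℝ (fun z' => w ⬝ᵥ (Pa z').mulVec w) z (Sum.elim (fx z) (fe z))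
          + w ⬝ᵥ (Pa z).mulVec (fderiv ℝ (fun z' => Sum.elim (fx z') (fe z')) z w)
        ≤ -qa * (w ⬝ᵥ (Pa z).mulVec w)) :
    (∀ x : Fin n → ℝ,
        ((Pa (Sum.elim x (0 : Fin k → ℝ))).toBlocks₁₁).IsSymm ∧
        ((Pa (Sum.elim x (0 : Fin k → ℝ))).toBlocks₁₁).PosDef) ∧
    ∀ (x v : Fin n → ℝ),
      fderiv ℝ (fun x' : Fin n → ℝ => ha (Sum.elim x' (0 : Fin k → ℝ))) x v = 0 →
      (1 / 2) * fderiv ℝ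
            (fun x' : Fin n → ℝ =>
              v ⬝ᵥ ((Pa (Sum.elim x' (0 : Fin k → ℝ))).toBlocks₁₁).mulVec v)
            x (fx (Sum.elim x (0 : Fin k → ℝ)))
          + v ⬝ᵥ ((Pa (Sum.elim x (0 : Fin k → ℝ))).toBlocks₁₁).mulVec
              (fderiv ℝ (fun x' : Fin n → ℝ => fx (Sum.elim x' (0 : Fin k → ℝ))) x v)
        ≤ -qa * (v ⬝ᵥ ((Pa (Sum.elim x (0 : Fin k → ℝ))).toBlocks₁₁).mulVec v) := by
  refine ⟨fun x => ⟨(hPasym _).submatrix Sum.inl, (hPapos _).submatrix Sum.inl_injective⟩, ?_⟩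
  intro x v hv
  have hfxd := hfx.differentiable one_ne_zero
  have hfed := hfe.differentiable one_ne_zero
  have hDha : fderiv ℝ ha (Sum.elim x 0) (Sum.elim v 0) = 0 := by
    rwa [fderiv_comp_sumElim_zero_apply (hha.differentiable one_ne_zero _)] at hv
  have hDfe : fderiv ℝ fe (Sum.elim x 0) (Sum.elim v 0) = 0 := by
    rw [← fderiv_comp_sumElim_zero_apply (hfed _), funext hfe0, fderiv_fun_const]
    rfl
  have hDfa : fderiv ℝ (fun z => Sum.elim (fx z) (fe z)) (Sum.elim x 0) (Sum.elim v 0)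
      = Sum.elim (fderiv ℝ fx (Sum.elim x 0) (Sum.elim v 0)) 0 := by
    rw [fderiv_sumElim_apply (hfxd _) (hfed _), hDfe]
  have hQ := differentiable_dotProduct_mulVec
    (fun a b => (hPac a b).differentiable one_ne_zero) (Sum.elim v (0 : Fin k → ℝ))
  have key := hyp _ _ hDha
  rw [hfe0, hDfa, ← fderiv_comp_sumElim_zero_apply (hQ _)] at key
  simpa only [sumElim_zero_dotProduct_mulVec_sumElim_zero,
    fderiv_comp_sumElim_zero_apply (hfxd _)] using key

/-- Dynamic extension preserves tangential differential detectability: writing `ℝᵐ` as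
`ℝⁿ × ℝᵏ` (indexed by `Fin n ⊕ Fin k`), if the augmented system `(f_x, f_e)` with output `h_a`
satisfies Condition A2 restricted to vectors annihilated by `Dh_a` with metric `P_a` and rate
`q_a`, then the restricted system `f(x) = f_x(x,0)`, `h(x) = h_a(x,0)` satisfies the analogous
property with the upper-left block `P(x)` of `P_a(x,0)`, which is symmetric positive definite. -/
theorem stmt_10 {n k p : ℕ} (hn : 1 ≤ n) (hp : 1 ≤ p)
    (fx : ((Fin n ⊕ Fin k) → ℝ) → (Fin n → ℝ))
    (fe : ((Fin n ⊕ Fin k) → ℝ) → (Fin k → ℝ))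
    (ha : ((Fin n ⊕ Fin k) → ℝ) → (Fin p → ℝ))
    (hfx : ContDiff ℝ 1 fx) (hfe : ContDiff ℝ 1 fe) (hha : ContDiff ℝ 1 ha)
    (hfe0 : ∀ x : Fin n → ℝ, fe (Sum.elim x (0 : Fin k → ℝ)) = 0)
    (Pa : ((Fin n ⊕ Fin k) → ℝ) → Matrix (Fin n ⊕ Fin k) (Fin n ⊕ Fin k) ℝ)
    (hPac : ∀ a b, ContDiff ℝ 1 fun z => Pa z a b)
    (hPasym : ∀ z, (Pa z).IsSymm) (hPapos : ∀ z, (Pa z).PosDef)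
    (qa : ℝ) (hqa : 0 < qa)
    (hyp : ∀ (z w : (Fin n ⊕ Fin k) → ℝ), fderiv ℝ ha z w = 0 →
      (1 / 2) * fderiv ℝ (fun z' => w ⬝ᵥ (Pa z').mulVec w) z (Sum.elim (fx z) (fe z))
          + w ⬝ᵥ (Pa z).mulVec (fderiv ℝ (fun z' => Sum.elim (fx z') (fe z')) z w)
        ≤ -qa * (w ⬝ᵥ (Pa z).mulVec w)) :
    (∀ x : Fin n → ℝ,
        ((Pa (Sum.elim x (0 : Fin k → ℝ))).toBlocks₁₁).IsSymm ∧
        ((Pa (Sum.elim x (0 : Fin k → ℝ))).toBlocks₁₁).PosDef) ∧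
    ∀ (x v : Fin n → ℝ),
      fderiv ℝ (fun x' : Fin n → ℝ => ha (Sum.elim x' (0 : Fin k → ℝ))) x v = 0 →
      (1 / 2) * fderiv ℝ
            (fun x' : Fin n → ℝ =>
              v ⬝ᵥ ((Pa (Sum.elim x' (0 : Fin k → ℝ))).toBlocks₁₁).mulVec v)
            x (fx (Sum.elim x (0 : Fin k → ℝ)))
          + v ⬝ᵥ ((Pa (Sum.elim x (0 : Fin k → ℝ))).toBlocks₁₁).mulVec
              (fderiv ℝ (fun x' : Fin n → ℝ => fx (Sum.elim x' (0 : Fin k → ℝ))) x v)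
        ≤ -qa * (v ⬝ᵥ ((Pa (Sum.elim x (0 : Fin k → ℝ))).toBlocks₁₁).mulVec v) :=
  stmt_10_general fx fe ha hfx hfe hha hfe0 Pa hPac hPasym hPapos qa hyp
end

section
/- Let n, p, s ≥ 1. Let f: ℝⁿ → ℝⁿ be C¹, let h: ℝⁿ → ℝᵖ and h^⊥: ℝⁿ → ℝˢ be C², let Q be a C¹ map from ℝᵖ to the real symmetric p×p matrices and R a C¹ map from ℝˢ to the real symmetric s×s matrices. Define P(x) := Dh(x)ᵀ·Q(h(x))·Dh(x) + Dh^⊥(x)ᵀ·R(h^⊥(x))·Dh^⊥(x) and g(x) := Dh^⊥(x)·f(x). Then for every x ∈ ℝⁿ and every v ∈ ℝⁿ with Dh(x)·v = 0, setting w := Dh^⊥(x)·v, one has vᵀ·L_f P(x)·v = wᵀ·(Σ_γ (∂R/∂ξ_γ)(h^⊥(x))·g_γ(x))·w + 2·(Dg(x)·v)ᵀ·R(h^⊥(x))·w, where ∂R/∂ξ_γ denotes the partial derivative of R with respect to its γ-th argument and Dg(x) is the Jacobian of g at x. -/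
open Matrix

/-- Partial derivative `∂g/∂x_a (x)` of a real-valued function on `ℝ^ι`. -/
noncomputable def pdv {ι : Type*} [Fintype ι] [DecidableEq ι]
    (g : (ι → ℝ) → ℝ) (a : ι) (x : ι → ℝ) : ℝ :=
  fderiv ℝ g x (Pi.single a 1)

/-- Jacobian matrix `Dh(x)` of `h : ℝ^ι → ℝ^κ`. -/
noncomputable def jacobianM {ι κ : Type*} [Fintype ι] [DecidableEq ι] [Fintype κ]
    (h : (ι → ℝ) → (κ → ℝ)) (x : ι → ℝ) : Matrix κ ι ℝ :=
  Matrix.of fun i a => fderiv ℝ h x (Pi.single a 1) i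

/-- Lie derivative of a matrix-valued map `P` along the vector field `f`:
`(L_f P)_{ab}(x) = Σ_c (∂P_{ab}/∂x_c·f_c + P_{ac}·∂f_c/∂x_b + P_{bc}·∂f_c/∂x_a)`. -/
noncomputable def lieDerivM {ι : Type*} [Fintype ι] [DecidableEq ι]
    (f : (ι → ℝ) → (ι → ℝ)) (P : (ι → ℝ) → Matrix ι ι ℝ) (x : ι → ℝ) : Matrix ι ι ℝ :=
  Matrix.of fun a b => ∑ c,
    (pdv (fun y => P y a b) c x * f x c
      + P x a c * pdv (fun y => f y c) b x
      + P x b c * pdv (fun y => f y c) a x)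

/-! Writing `q(y) = vᵀ·P(y)·v`, the Lie derivative satisfies
`vᵀ·L_f P(x)·v = Dq(x)·f(x) + 2·vᵀ·P(x)·Df(x)·v`. For `v ∈ ker Dh(x)` the `Q`-part of `q` is a
quadratic form in `Dh(y)·v`, which vanishes at `x`, so it contributes neither to `Dq(x)` nor to
`P(x)·Df(x)·v`. The `R`-part is differentiated by the product rule; symmetry of the second
derivative of `h^⊥` identifies `D²h^⊥(x)(f(x), v)` with the second-order part of `Dg(x)·v`, and
symmetry of `R` merges the two cross terms. -/

theorem dotProduct_transpose_mul_mul_mulVec {ι κ R : Type*} [Fintype ι] [Fintype κ]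
    [CommSemiring R] (J : Matrix κ ι R) (M : Matrix κ κ R) (v₁ v₂ : ι → R) :
    v₁ ⬝ᵥ (Jᵀ * M * J) *ᵥ v₂ = J *ᵥ v₁ ⬝ᵥ M *ᵥ (J *ᵥ v₂) := by
  rw [← mulVec_mulVec, ← mulVec_mulVec, dotProduct_mulVec, vecMul_transpose]

theorem Matrix.IsSymm.dotProduct_mulVec_comm {κ R : Type*} [Fintype κ] [CommSemiring R]
    {M : Matrix κ κ R} (hM : M.IsSymm) (u w : κ → R) : u ⬝ᵥ M *ᵥ w = w ⬝ᵥ M *ᵥ u := by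
  rw [dotProduct_mulVec, ← mulVec_transpose, hM.eq, dotProduct_comm]

section Coordinates

variable {ι κ : Type*} [Fintype ι] [DecidableEq ι] [Fintype κ]

theorem ContinuousLinearMap.apply_eq_sum_smul_single {R F : Type*} [Semiring R]
    [TopologicalSpace R] [AddCommMonoid F] [Module R F] [TopologicalSpace F]
    (L : (ι → R) →L[R] F) (v : ι → R) :
    L v = ∑ a, v a • L (Pi.single a 1) := by
  conv_lhs => rw [pi_eq_sum_univ' v]
  simp only [map_sum, map_smul]

theorem sum_pdv_mul (g : (ι → ℝ) → ℝ) (x z : ι → ℝ) :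
    ∑ c, pdv g c x * z c = fderiv ℝ g x z := by
  simp only [(fderiv ℝ g x).apply_eq_sum_smul_single z, pdv, smul_eq_mul, mul_comm]

theorem jacobianM_mulVec (h : (ι → ℝ) → κ → ℝ) (y v : ι → ℝ) :
    jacobianM h y *ᵥ v = fderiv ℝ h y v := by
  ext i
  simp [(fderiv ℝ h y).apply_eq_sum_smul_single v, jacobianM, mulVec, dotProduct, mul_comm]

theorem pdv_apply_eq_jacobianM {f : (ι → ℝ) → κ → ℝ} {x : ι → ℝ} (hf : DifferentiableAt ℝ f x)
    (c : κ) (b : ι) : pdv (fun y => f y c) b x = jacobianM f x c b := by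
  simp [pdv, jacobianM, fderiv_apply hf]

end Coordinates

section QuadraticForm

variable {𝕜 E κ : Type*} [NontriviallyNormedField 𝕜] [NormedAddCommGroup E] [NormedSpace 𝕜 E]
  [Fintype κ] {u u' : E → κ → 𝕜} {M : E → Matrix κ κ 𝕜} {x : E}

theorem DifferentiableAt.dotProduct_mulVec (hu : DifferentiableAt 𝕜 u x)
    (hM : ∀ i j, DifferentiableAt 𝕜 (fun y => M y i j) x) (hu' : DifferentiableAt 𝕜 u' x) :
    DifferentiableAt 𝕜 (fun y => u y ⬝ᵥ M y *ᵥ u' y) x := by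
  have hc : ∀ i, DifferentiableAt 𝕜 (fun y => u y i) x := differentiableAt_pi.1 hu
  have hc' : ∀ j, DifferentiableAt 𝕜 (fun y => u' y j) x := differentiableAt_pi.1 hu'
  simp only [dotProduct, mulVec]
  fun_prop

theorem fderiv_dotProduct_mulVec_apply (hu : DifferentiableAt 𝕜 u x)
    (hM : ∀ i j, DifferentiableAt 𝕜 (fun y => M y i j) x) (hu' : DifferentiableAt 𝕜 u' x) (z : E) :
    fderiv 𝕜 (fun y => u y ⬝ᵥ M y *ᵥ u' y) x z
      = fderiv 𝕜 u x z ⬝ᵥ M x *ᵥ u' x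
        + u x ⬝ᵥ (of fun i j => fderiv 𝕜 (fun y => M y i j) x z) *ᵥ u' x
        + u x ⬝ᵥ M x *ᵥ fderiv 𝕜 u' x z := by
  have hc : ∀ i, DifferentiableAt 𝕜 (fun y => u y i) x := differentiableAt_pi.1 hu
  have hc' : ∀ j, DifferentiableAt 𝕜 (fun y => u' y j) x := differentiableAt_pi.1 hu'
  simp only [dotProduct, mulVec]
  simp (disch := fun_prop) only [fderiv_fun_sum, fderiv_fun_mul, _root_.sum_apply,
    _root_.add_apply, _root_.smul_apply, smul_eq_mul, fderiv_apply hu, fderiv_apply hu',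
    ContinuousLinearMap.coe_comp, Function.comp_apply, ContinuousLinearMap.proj_apply, of_apply]
  rw [← Finset.sum_add_distrib, ← Finset.sum_add_distrib]
  refine Finset.sum_congr rfl fun i _ => ?_
  simp only [mul_add, Finset.sum_add_distrib, mul_comm (u' x _)]
  ring

end QuadraticForm

section LieDerivative

variable {ι : Type*} [Fintype ι] [DecidableEq ι] {f : (ι → ℝ) → ι → ℝ}
  {P : (ι → ℝ) → Matrix ι ι ℝ} {x : ι → ℝ}

theorem lieDerivM_eq (hf : DifferentiableAt ℝ f x) :
    lieDerivM f P x = of (fun a b => fderiv ℝ (fun y => P y a b) x (f x))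
      + P x * jacobianM f x + (P x * jacobianM f x)ᵀ := by
  ext a b
  simp only [lieDerivM, of_apply, Matrix.add_apply, mul_apply, transpose_apply,
    Finset.sum_add_distrib, sum_pdv_mul, pdv_apply_eq_jacobianM hf]

theorem dotProduct_lieDerivM_mulVec (hf : DifferentiableAt ℝ f x)
    (hP : ∀ a b, DifferentiableAt ℝ (fun y => P y a b) x) (v : ι → ℝ) :
    v ⬝ᵥ lieDerivM f P x *ᵥ v
      = fderiv ℝ (fun y => v ⬝ᵥ P y *ᵥ v) x (f x) + 2 * (v ⬝ᵥ P x *ᵥ fderiv ℝ f x v) := by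
  have hT : v ⬝ᵥ (P x * jacobianM f x)ᵀ *ᵥ v = v ⬝ᵥ (P x * jacobianM f x) *ᵥ v := by
    rw [mulVec_transpose, dotProduct_comm, ← dotProduct_mulVec]
  have hDq : fderiv ℝ (fun y => v ⬝ᵥ P y *ᵥ v) x (f x)
      = v ⬝ᵥ (of fun a b => fderiv ℝ (fun y => P y a b) x (f x)) *ᵥ v := by
    simpa using fderiv_dotProduct_mulVec_apply (differentiableAt_const v) hP
      (differentiableAt_const v) (f x)
  rw [lieDerivM_eq hf, add_mulVec, add_mulVec, dotProduct_add, dotProduct_add, hT,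
    ← mulVec_mulVec, jacobianM_mulVec, hDq]
  ring

end LieDerivative

section SecondDerivative

variable {𝕜 E F : Type*} [NontriviallyNormedField 𝕜] [NormedAddCommGroup E] [NormedSpace 𝕜 E]
  [NormedAddCommGroup F] [NormedSpace 𝕜 F] {h : E → F} {x : E}

theorem ContDiffAt.differentiableAt_fderiv (hh : ContDiffAt 𝕜 2 h x) :
    DifferentiableAt 𝕜 (fderiv 𝕜 h) x :=
  (hh.fderiv_right (m := 1) (by norm_num)).differentiableAt one_ne_zero

theorem ContDiffAt.differentiableAt_fderiv_apply (hh : ContDiffAt 𝕜 2 h x) (v : E) :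
    DifferentiableAt 𝕜 (fun y => fderiv 𝕜 h y v) x :=
  hh.differentiableAt_fderiv.clm_apply (differentiableAt_const v)

theorem ContDiffAt.fderiv_fderiv_apply_comp (hh : ContDiffAt 𝕜 2 h x) {f : E → E}
    (hf : DifferentiableAt 𝕜 f x) (z : E) :
    fderiv 𝕜 (fun y => fderiv 𝕜 h y (f y)) x z
      = fderiv 𝕜 (fderiv 𝕜 h) x z (f x) + fderiv 𝕜 h x (fderiv 𝕜 f x z) := by
  rw [fderiv_clm_apply hh.differentiableAt_fderiv hf]
  simp [add_comm]

theorem ContDiffAt.fderiv_fderiv_apply (hh : ContDiffAt 𝕜 2 h x) (v z : E) :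
    fderiv 𝕜 (fun y => fderiv 𝕜 h y v) x z = fderiv 𝕜 (fderiv 𝕜 h) x z v := by
  simpa using hh.fderiv_fderiv_apply_comp (differentiableAt_const v) z

end SecondDerivative

section Pullback

variable {ι κ : Type*} [Fintype ι] [DecidableEq ι] [Fintype κ]

noncomputable def pullbackM (h : (ι → ℝ) → κ → ℝ) (M : (κ → ℝ) → Matrix κ κ ℝ) (y : ι → ℝ) :
    Matrix ι ι ℝ :=
  (jacobianM h y)ᵀ * M (h y) * jacobianM h y

variable {h : (ι → ℝ) → κ → ℝ} {M : (κ → ℝ) → Matrix κ κ ℝ} {x : ι → ℝ}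

theorem dotProduct_pullbackM_mulVec (h : (ι → ℝ) → κ → ℝ) (M : (κ → ℝ) → Matrix κ κ ℝ)
    (y v₁ v₂ : ι → ℝ) :
    v₁ ⬝ᵥ pullbackM h M y *ᵥ v₂ = fderiv ℝ h y v₁ ⬝ᵥ M (h y) *ᵥ fderiv ℝ h y v₂ := by
  rw [pullbackM, dotProduct_transpose_mul_mul_mulVec, jacobianM_mulVec, jacobianM_mulVec]

theorem differentiableAt_pullbackM_apply (hh : ContDiffAt ℝ 2 h x)
    (hM : ∀ i j, DifferentiableAt ℝ (fun ξ => M ξ i j) (h x)) (a b : ι) :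
    DifferentiableAt ℝ (fun y => pullbackM h M y a b) x := by
  have hentry : (fun y => pullbackM h M y a b) = fun y =>
      fderiv ℝ h y (Pi.single a 1) ⬝ᵥ M (h y) *ᵥ fderiv ℝ h y (Pi.single b 1) := by
    ext y
    rw [← dotProduct_pullbackM_mulVec, mulVec_single_one, single_one_dotProduct, col_apply]
  rw [hentry]
  exact (hh.differentiableAt_fderiv_apply _).dotProduct_mulVec
    (fun i j => (hM i j).comp x (hh.differentiableAt (by norm_num)))
    (hh.differentiableAt_fderiv_apply _)

theorem differentiableAt_dotProduct_pullbackM_mulVec (hh : ContDiffAt ℝ 2 h x)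
    (hM : ∀ i j, DifferentiableAt ℝ (fun ξ => M ξ i j) (h x)) (v : ι → ℝ) :
    DifferentiableAt ℝ (fun y => v ⬝ᵥ pullbackM h M y *ᵥ v) x :=
  (differentiableAt_const v).dotProduct_mulVec (differentiableAt_pullbackM_apply hh hM)
    (differentiableAt_const v)

theorem fderiv_dotProduct_pullbackM_mulVec_apply (hh : ContDiffAt ℝ 2 h x)
    (hM : ∀ i j, DifferentiableAt ℝ (fun ξ => M ξ i j) (h x)) (v z : ι → ℝ) :
    fderiv ℝ (fun y => v ⬝ᵥ pullbackM h M y *ᵥ v) x z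
      = fderiv ℝ (fderiv ℝ h) x z v ⬝ᵥ M (h x) *ᵥ fderiv ℝ h x v
        + fderiv ℝ h x v ⬝ᵥ (of fun i j => fderiv ℝ (fun ξ => M ξ i j) (h x) (fderiv ℝ h x z))
            *ᵥ fderiv ℝ h x v
        + fderiv ℝ h x v ⬝ᵥ M (h x) *ᵥ fderiv ℝ (fderiv ℝ h) x z v := by
  have hhx : DifferentiableAt ℝ h x := hh.differentiableAt (by norm_num)
  simp only [dotProduct_pullbackM_mulVec]
  rw [fderiv_dotProduct_mulVec_apply (M := fun y => M (h y)) (hh.differentiableAt_fderiv_apply v)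
    (fun i j => (hM i j).comp x hhx) (hh.differentiableAt_fderiv_apply v), hh.fderiv_fderiv_apply]
  simp only [fderiv_fun_comp x (hM _ _) hhx, ContinuousLinearMap.coe_comp, Function.comp_apply]

theorem fderiv_dotProduct_pullbackM_mulVec_apply_of_fderiv_eq_zero (hh : ContDiffAt ℝ 2 h x)
    (hM : ∀ i j, DifferentiableAt ℝ (fun ξ => M ξ i j) (h x)) {v : ι → ℝ}
    (hv : fderiv ℝ h x v = 0) (z : ι → ℝ) :
    fderiv ℝ (fun y => v ⬝ᵥ pullbackM h M y *ᵥ v) x z = 0 := by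
  simp [fderiv_dotProduct_pullbackM_mulVec_apply hh hM, hv]

theorem fderiv_dotProduct_pullbackM_mulVec_apply_of_isSymm (hh : ContDiffAt ℝ 2 h x)
    (hM : ∀ i j, DifferentiableAt ℝ (fun ξ => M ξ i j) (h x)) (hMsym : (M (h x)).IsSymm)
    (v z : ι → ℝ) :
    fderiv ℝ (fun y => v ⬝ᵥ pullbackM h M y *ᵥ v) x z
      = fderiv ℝ h x v ⬝ᵥ (of fun i j => fderiv ℝ (fun ξ => M ξ i j) (h x) (fderiv ℝ h x z))
            *ᵥ fderiv ℝ h x v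
        + 2 * (fderiv ℝ (fderiv ℝ h) x z v ⬝ᵥ M (h x) *ᵥ fderiv ℝ h x v) := by
  rw [fderiv_dotProduct_pullbackM_mulVec_apply hh hM,
    hMsym.dotProduct_mulVec_comm (fderiv ℝ h x v)]
  ring

end Pullback

theorem dotProduct_lieDerivM_add_pullbackM_mulVec_of_fderiv_eq_zero
    {ι κ κ' : Type*} [Fintype ι] [DecidableEq ι] [Fintype κ] [Fintype κ']
    {f : (ι → ℝ) → ι → ℝ} {h : (ι → ℝ) → κ → ℝ} {M : (κ → ℝ) → Matrix κ κ ℝ}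
    {h' : (ι → ℝ) → κ' → ℝ} {M' : (κ' → ℝ) → Matrix κ' κ' ℝ} {x v : ι → ℝ}
    (hf : DifferentiableAt ℝ f x) (hh : ContDiffAt ℝ 2 h x)
    (hM : ∀ i j, DifferentiableAt ℝ (fun ξ => M ξ i j) (h x)) (hh' : ContDiffAt ℝ 2 h' x)
    (hM' : ∀ i j, DifferentiableAt ℝ (fun ξ => M' ξ i j) (h' x)) (hv : fderiv ℝ h x v = 0) :
    v ⬝ᵥ lieDerivM f (fun y => pullbackM h M y + pullbackM h' M' y) x *ᵥ v
      = fderiv ℝ (fun y => v ⬝ᵥ pullbackM h' M' y *ᵥ v) x (f x)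
        + 2 * (fderiv ℝ h' x v ⬝ᵥ M' (h' x) *ᵥ fderiv ℝ h' x (fderiv ℝ f x v)) := by
  have hP a b : DifferentiableAt ℝ (fun y => (pullbackM h M y + pullbackM h' M' y) a b) x :=
    (differentiableAt_pullbackM_apply hh hM a b).add (differentiableAt_pullbackM_apply hh' hM' a b)
  have hq : (fun y => v ⬝ᵥ (pullbackM h M y + pullbackM h' M' y) *ᵥ v)
      = fun y => v ⬝ᵥ pullbackM h M y *ᵥ v + v ⬝ᵥ pullbackM h' M' y *ᵥ v := by
    simp only [add_mulVec, dotProduct_add]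
  rw [dotProduct_lieDerivM_mulVec hf hP, hq,
    fderiv_fun_add (differentiableAt_dotProduct_pullbackM_mulVec hh hM v)
      (differentiableAt_dotProduct_pullbackM_mulVec hh' hM' v), _root_.add_apply,
    fderiv_dotProduct_pullbackM_mulVec_apply_of_fderiv_eq_zero hh hM hv, add_mulVec,
    dotProduct_add, dotProduct_pullbackM_mulVec, dotProduct_pullbackM_mulVec, hv]
  simp only [zero_dotProduct, zero_add]

theorem stmt_11_general {n p s : ℕ}
    (f : (Fin n → ℝ) → (Fin n → ℝ)) (hf : ContDiff ℝ 1 f)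
    (h : (Fin n → ℝ) → (Fin p → ℝ)) (hh : ContDiff ℝ 2 h)
    (hperp : (Fin n → ℝ) → (Fin s → ℝ)) (hhperp : ContDiff ℝ 2 hperp)
    (Q : (Fin p → ℝ) → Matrix (Fin p) (Fin p) ℝ)
    (hQc : ∀ i j, ContDiff ℝ 1 fun y => Q y i j)
    (R : (Fin s → ℝ) → Matrix (Fin s) (Fin s) ℝ)
    (hRc : ∀ α β, ContDiff ℝ 1 fun ξ => R ξ α β) (hRsym : ∀ ξ, (R ξ).IsSymm) :
    let P : (Fin n → ℝ) → Matrix (Fin n) (Fin n) ℝ := fun x =>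
      (jacobianM h x)ᵀ * Q (h x) * jacobianM h x
        + (jacobianM hperp x)ᵀ * R (hperp x) * jacobianM hperp x
    let g : (Fin n → ℝ) → (Fin s → ℝ) := fun x => fderiv ℝ hperp x (f x)
    ∀ (x v : Fin n → ℝ), fderiv ℝ h x v = 0 →
      v ⬝ᵥ (lieDerivM f P x).mulVec v
        = (fderiv ℝ hperp x v) ⬝ᵥ
            (Matrix.of fun α β =>
              ∑ γ, pdv (fun ξ => R ξ α β) γ (hperp x) * g x γ).mulVec (fderiv ℝ hperp x v)
          + 2 * ((fderiv ℝ g x v) ⬝ᵥ (R (hperp x)).mulVec (fderiv ℝ hperp x v)) := by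
  intro P g x v hv
  have hperpx : ContDiffAt ℝ 2 hperp x := hhperp.contDiffAt
  have hRx : ∀ α β, DifferentiableAt ℝ (fun ξ => R ξ α β) (hperp x) :=
    fun α β => (hRc α β).differentiable one_ne_zero _
  rw [show P = fun y => pullbackM h Q y + pullbackM hperp R y from rfl,
    dotProduct_lieDerivM_add_pullbackM_mulVec_of_fderiv_eq_zero (hf.differentiable one_ne_zero x)
      hh.contDiffAt (fun i j => (hQc i j).differentiable one_ne_zero _) hperpx hRx hv,
    fderiv_dotProduct_pullbackM_mulVec_apply_of_isSymm hperpx hRx (hRsym _),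
    hperpx.fderiv_fderiv_apply_comp (hf.differentiable one_ne_zero x),
    (hperpx.isSymmSndFDerivAt (by simp)).eq (f x) v, add_dotProduct]
  simp only [sum_pdv_mul]
  linear_combination -2 * (hRsym (hperp x)).dotProduct_mulVec_comm
    (fderiv ℝ hperp x (fderiv ℝ f x v)) (fderiv ℝ hperp x v)

/-- For the pullback metric `P = Dhᵀ·(Q∘h)·Dh + Dh^⊥ᵀ·(R∘h^⊥)·Dh^⊥` and `g := Dh^⊥·f`, for every
`v` with `Dh(x)·v = 0` and `w := Dh^⊥(x)·v`:
`vᵀ·L_f P(x)·v = wᵀ·(Σ_γ ∂R/∂ξ_γ(h^⊥(x))·g_γ(x))·w + 2·(Dg(x)·v)ᵀ·R(h^⊥(x))·w`. -/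
theorem stmt_11 {n p s : ℕ} (hn : 1 ≤ n) (hp : 1 ≤ p) (hs : 1 ≤ s)
    (f : (Fin n → ℝ) → (Fin n → ℝ)) (hf : ContDiff ℝ 1 f)
    (h : (Fin n → ℝ) → (Fin p → ℝ)) (hh : ContDiff ℝ 2 h)
    (hperp : (Fin n → ℝ) → (Fin s → ℝ)) (hhperp : ContDiff ℝ 2 hperp)
    (Q : (Fin p → ℝ) → Matrix (Fin p) (Fin p) ℝ)
    (hQc : ∀ i j, ContDiff ℝ 1 fun y => Q y i j) (hQsym : ∀ y, (Q y).IsSymm)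
    (R : (Fin s → ℝ) → Matrix (Fin s) (Fin s) ℝ)
    (hRc : ∀ α β, ContDiff ℝ 1 fun ξ => R ξ α β) (hRsym : ∀ ξ, (R ξ).IsSymm) :
    let P : (Fin n → ℝ) → Matrix (Fin n) (Fin n) ℝ := fun x =>
      (jacobianM h x)ᵀ * Q (h x) * jacobianM h x
        + (jacobianM hperp x)ᵀ * R (hperp x) * jacobianM hperp x
    let g : (Fin n → ℝ) → (Fin s → ℝ) := fun x => fderiv ℝ hperp x (f x)
    ∀ (x v : Fin n → ℝ), fderiv ℝ h x v = 0 →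
      v ⬝ᵥ (lieDerivM f P x).mulVec v
        = (fderiv ℝ hperp x v) ⬝ᵥ
            (Matrix.of fun α β =>
              ∑ γ, pdv (fun ξ => R ξ α β) γ (hperp x) * g x γ).mulVec (fderiv ℝ hperp x v)
          + 2 * ((fderiv ℝ g x v) ⬝ᵥ (R (hperp x)).mulVec (fderiv ℝ hperp x v)) :=
  stmt_11_general f hf h hh hperp hhperp Q hQc R hRc hRsym
end

section
/- Let 1 ≤ p ≤ n. Let J be an invertible real n×n matrix, K an invertible real p×p matrix, P̄ a real symmetric positive definite n×n matrix, Q̄ a real symmetric positive definite p×p matrix, and H̄ a real p×n matrix of rank p. Define P := Jᵀ·P̄·J, Q := Kᵀ·Q̄·K and H := K⁻¹·H̄·J. Then H has rank p and Jᵀ·(P̄ + H̄ᵀ·(Q̄ − (H̄·P̄⁻¹·H̄ᵀ)⁻¹)·H̄)·J = P + Hᵀ·(Q − (H·P⁻¹·Hᵀ)⁻¹)·H. -/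
open Matrix

/-- The modified metric `P_mod = P + Hᵀ·(Q − (H·P⁻¹·Hᵀ)⁻¹)·H` transforms as a covariant
2-tensor: with `P = Jᵀ·P̄·J`, `Q = Kᵀ·Q̄·K` and `H = K⁻¹·H̄·J` (for `J`, `K` invertible and `H̄`
of rank `p`), `H` has rank `p` and
`Jᵀ·(P̄ + H̄ᵀ·(Q̄ − (H̄·P̄⁻¹·H̄ᵀ)⁻¹)·H̄)·J = P + Hᵀ·(Q − (H·P⁻¹·Hᵀ)⁻¹)·H`. -/
theorem stmt_12 {n p : ℕ} (hp1 : 1 ≤ p) (hpn : p ≤ n)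
    (J : Matrix (Fin n) (Fin n) ℝ) (hJ : IsUnit J.det)
    (K : Matrix (Fin p) (Fin p) ℝ) (hK : IsUnit K.det)
    (Pbar : Matrix (Fin n) (Fin n) ℝ) (hPbarsym : Pbar.IsSymm) (hPbar : Pbar.PosDef)
    (Qbar : Matrix (Fin p) (Fin p) ℝ) (hQbarsym : Qbar.IsSymm) (hQbar : Qbar.PosDef)
    (Hbar : Matrix (Fin p) (Fin n) ℝ) (hHbar : Hbar.rank = p) :
    (K⁻¹ * Hbar * J).rank = p ∧
      Jᵀ * (Pbar + Hbarᵀ * (Qbar - (Hbar * Pbar⁻¹ * Hbarᵀ)⁻¹) * Hbar) * J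
        = (Jᵀ * Pbar * J) + (K⁻¹ * Hbar * J)ᵀ *
            ((Kᵀ * Qbar * K) -
              ((K⁻¹ * Hbar * J) * (Jᵀ * Pbar * J)⁻¹ * (K⁻¹ * Hbar * J)ᵀ)⁻¹) *
            (K⁻¹ * Hbar * J) := by
  have hJt : IsUnit Jᵀ.det := by rwa [Matrix.det_transpose]
  have hKi : IsUnit (K⁻¹).det := K.isUnit_nonsing_inv_det hK
  have hKt : IsUnit Kᵀ.det := by rwa [Matrix.det_transpose]
  constructor
  · rw [Matrix.rank_mul_eq_left_of_isUnit_det J (K⁻¹ * Hbar) hJ,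
      Matrix.rank_mul_eq_right_of_isUnit_det K⁻¹ Hbar hKi, hHbar]
  · -- key: H * P⁻¹ * Hᵀ = K⁻¹ * (H̄ * P̄⁻¹ * H̄ᵀ) * (K⁻¹)ᵀ
    have hPinv : (Jᵀ * Pbar * J)⁻¹ = J⁻¹ * Pbar⁻¹ * Jᵀ⁻¹ := by
      rw [Matrix.mul_inv_rev, Matrix.mul_inv_rev, Matrix.mul_assoc]
    have hmid : (K⁻¹ * Hbar * J) * (Jᵀ * Pbar * J)⁻¹ * (K⁻¹ * Hbar * J)ᵀ
        = K⁻¹ * (Hbar * Pbar⁻¹ * Hbarᵀ) * Kᵀ⁻¹ := by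
      rw [hPinv, Matrix.transpose_mul, Matrix.transpose_mul, Matrix.transpose_nonsing_inv]
      simp only [Matrix.mul_assoc]
      rw [Matrix.mul_nonsing_inv_cancel_left J _ hJ,
        Matrix.nonsing_inv_mul_cancel_left Jᵀ _ hJt]
    have hmidinv : ((K⁻¹ * Hbar * J) * (Jᵀ * Pbar * J)⁻¹ * (K⁻¹ * Hbar * J)ᵀ)⁻¹
        = Kᵀ * (Hbar * Pbar⁻¹ * Hbarᵀ)⁻¹ * K := by
      rw [hmid, Matrix.mul_inv_rev, Matrix.mul_inv_rev,
        Matrix.nonsing_inv_nonsing_inv K hK, Matrix.nonsing_inv_nonsing_inv Kᵀ hKt,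
        Matrix.mul_assoc, Matrix.mul_assoc]
    rw [hmidinv]
    have hsub : Kᵀ * Qbar * K - Kᵀ * (Hbar * Pbar⁻¹ * Hbarᵀ)⁻¹ * K
        = Kᵀ * (Qbar - (Hbar * Pbar⁻¹ * Hbarᵀ)⁻¹) * K := by
      rw [Matrix.mul_sub, Matrix.sub_mul]
    rw [hsub]
    have hcancel : (K⁻¹ * Hbar * J)ᵀ * (Kᵀ * (Qbar - (Hbar * Pbar⁻¹ * Hbarᵀ)⁻¹) * K) *
        (K⁻¹ * Hbar * J)
        = Jᵀ * (Hbarᵀ * (Qbar - (Hbar * Pbar⁻¹ * Hbarᵀ)⁻¹) * Hbar) * J := by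
      rw [Matrix.transpose_mul, Matrix.transpose_mul, Matrix.transpose_nonsing_inv]
      simp only [Matrix.mul_assoc]
      rw [Matrix.nonsing_inv_mul_cancel_left Kᵀ _ hKt,
        show K * (K⁻¹ * (Hbar * J)) = Hbar * J from
          Matrix.mul_nonsing_inv_cancel_left K _ hK]
    rw [hcancel, Matrix.mul_add, Matrix.add_mul]
end

section
/- Let p ≥ 1, let g be a real symmetric positive definite p×p matrix, let L be an arbitrary real p×p matrix, and let a, b, c be real numbers with a > 0, b > 0 and c² < a·b. Define the p×p blocks P_yy := a·g − c·(Lᵀ·g + g·L) + b·Lᵀ·g·L, P_yz := −c·g + b·Lᵀ·g, P_zy := −c·g + b·g·L and P_zz := b·g, and let P be the 2p×2p block matrix [[P_yy, P_yz],[P_zy, P_zz]]. Then P is symmetric positive definite and P_yy − P_yz·P_zz⁻¹·P_zy = (a − c²/b)·g. -/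
/-!
Writing `s = a - c² / b`, the Schur complement of the block `P_zz = b • g` in `P` is `s • g`, a
direct computation in which every `g⁻¹` cancels against a neighbouring `g`. Since `P_zz` is positive
definite and `s > 0` (this is `c² < a b`), the block matrix is positive semidefinite by the Schur
complement criterion, and invertible because `det P = det P_zz · det (s • g) ≠ 0`; so it is positive
definite, and in particular symmetric.
-/

open Matrix

open ComplexOrder in
theorem Matrix.posDef_fromBlocks₂₂ {𝕜 m n : Type*} [RCLike 𝕜]
    [Fintype m] [Fintype n] [DecidableEq m] [DecidableEq n]
    {A : Matrix m m 𝕜} {B : Matrix m n 𝕜} {D : Matrix n n 𝕜} (hD : D.PosDef)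
    (hS : (A - B * D⁻¹ * Bᴴ).PosDef) : (fromBlocks A B Bᴴ D).PosDef := by
  have := hD.isUnit.invertible
  refine ((PosDef.fromBlocks₂₂ A B hD).2 hS.posSemidef).posDef_iff_isUnit.2 ?_
  rw [isUnit_iff_isUnit_det, det_fromBlocks₂₂, invOf_eq_nonsing_inv]
  exact ((isUnit_iff_isUnit_det _).1 hD.isUnit).mul ((isUnit_iff_isUnit_det _).1 hS.isUnit)

theorem Matrix.sasaki_schur_complement {K n : Type*} [Field K] [Fintype n] [DecidableEq n]
    {g : Matrix n n K} (hg : IsUnit g) (L : Matrix n n K) {b : K} (hb : b ≠ 0) (a c : K) :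
    a • g - c • (Lᵀ * g + g * L) + b • (Lᵀ * g * L)
      - ((-c) • g + b • (Lᵀ * g)) * (b • g)⁻¹ * ((-c) • g + b • (g * L))
      = (a - c ^ 2 / b) • g := by
  have hg' : IsUnit g.det := (isUnit_iff_isUnit_det g).1 hg
  have := invertibleOfNonzero hb
  rw [inv_smul g b hg', invOf_eq_inv]
  simp only [Matrix.mul_add, Matrix.add_mul, smul_mul_assoc, mul_smul_comm, smul_smul, smul_add,
    Matrix.mul_assoc, nonsing_inv_mul_cancel_left _ _ hg', mul_nonsing_inv_cancel_right _ _ hg',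
    nonsing_inv_mul _ hg', Matrix.mul_one]
  match_scalars <;> field_simp <;> ring

theorem stmt_13_general {p : ℕ}
    (g : Matrix (Fin p) (Fin p) ℝ) (hg : g.PosDef)
    (L : Matrix (Fin p) (Fin p) ℝ)
    (a b c : ℝ) (hb : 0 < b) (hc : c ^ 2 < a * b) :
    let Pyy : Matrix (Fin p) (Fin p) ℝ := a • g - c • (Lᵀ * g + g * L) + b • (Lᵀ * g * L)
    let Pyz : Matrix (Fin p) (Fin p) ℝ := (-c) • g + b • (Lᵀ * g)
    let Pzy : Matrix (Fin p) (Fin p) ℝ := (-c) • g + b • (g * L)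
    let Pzz : Matrix (Fin p) (Fin p) ℝ := b • g
    (Matrix.fromBlocks Pyy Pyz Pzy Pzz).IsSymm ∧
      (Matrix.fromBlocks Pyy Pyz Pzy Pzz).PosDef ∧
      Pyy - Pyz * Pzz⁻¹ * Pzy = (a - c ^ 2 / b) • g := by
  intro Pyy Pyz Pzy Pzz
  have hschur : Pyy - Pyz * Pzz⁻¹ * Pzy = (a - c ^ 2 / b) • g :=
    sasaki_schur_complement hg.isUnit L hb.ne' a c
  have hs : 0 < a - c ^ 2 / b := by
    rw [sub_pos, div_lt_iff₀ hb]
    exact hc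
  have hgT : gᵀ = g := isHermitian_iff_isSymm.1 hg.isHermitian
  have hPzy : Pzy = Pyzᴴ := by
    simp [Pyz, Pzy, transpose_add, transpose_smul, transpose_mul, hgT]
  have hpos : (fromBlocks Pyy Pyz Pzy Pzz).PosDef := by
    rw [hPzy]
    refine posDef_fromBlocks₂₂ (hg.smul hb) ?_
    rw [← hPzy, hschur]
    exact hg.smul hs
  exact ⟨isHermitian_iff_isSymm.1 hpos.isHermitian, hpos, hschur⟩

/-- The modified Sasaki-type block metric: for `g` symmetric positive definite, `L` arbitrary,
and `a, b, c` with `a > 0`, `b > 0`, `c² < a·b`, the block matrix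
`P = [[a·g − c·(Lᵀg + gL) + b·LᵀgL, −c·g + b·Lᵀg], [−c·g + b·gL, b·g]]` is symmetric positive
definite and its Schur complement is `P_yy − P_yz·P_zz⁻¹·P_zy = (a − c²/b)·g`. -/
theorem stmt_13 {p : ℕ} (hp : 1 ≤ p)
    (g : Matrix (Fin p) (Fin p) ℝ) (hgsym : g.IsSymm) (hg : g.PosDef)
    (L : Matrix (Fin p) (Fin p) ℝ)
    (a b c : ℝ) (ha : 0 < a) (hb : 0 < b) (hc : c ^ 2 < a * b) :
    let Pyy : Matrix (Fin p) (Fin p) ℝ := a • g - c • (Lᵀ * g + g * L) + b • (Lᵀ * g * L)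
    let Pyz : Matrix (Fin p) (Fin p) ℝ := (-c) • g + b • (Lᵀ * g)
    let Pzy : Matrix (Fin p) (Fin p) ℝ := (-c) • g + b • (g * L)
    let Pzz : Matrix (Fin p) (Fin p) ℝ := b • g
    (Matrix.fromBlocks Pyy Pyz Pzy Pzz).IsSymm ∧
      (Matrix.fromBlocks Pyy Pyz Pzy Pzz).PosDef ∧
      Pyy - Pyz * Pzz⁻¹ * Pzy = (a - c ^ 2 / b) • g :=
  stmt_13_general g hg L a b c hb hc
end

section
/- For every real number ε > 0 there exist real numbers a > 0, b > 0 and q > 0 such that: (i) 4·(1/ε + 1)² ≤ (2 − q)·b; (ii) 1 − 4·a·b/ε² − q > 0; and (iii) (64·a²/ε⁶)·(b + 1 + a·b²)²·(1 + 4·a/ε²)² < 4·((a/2)·min(2 − q, b)·(ε²/4) − q)·(1 − 4·a·b/ε² − q). Moreover, one may take b = 4·(1/ε + 1)². -/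
set_option maxHeartbeats 1000000 in
/-- For every `ε > 0` there exist `a, b, q > 0`, with `b = 4·(1/ε + 1)²`, satisfying
(i) `4·(1/ε + 1)² ≤ (2 − q)·b`, (ii) `1 − 4·a·b/ε² − q > 0`, and
(iii) `(64·a²/ε⁶)·(b + 1 + a·b²)²·(1 + 4·a/ε²)² <
       4·((a/2)·min(2 − q, b)·(ε²/4) − q)·(1 − 4·a·b/ε² − q)`. -/
theorem stmt_14 :
    ∀ ε : ℝ, 0 < ε → ∃ a b q : ℝ,
      0 < a ∧ 0 < b ∧ 0 < q ∧
      b = 4 * (1 / ε + 1) ^ 2 ∧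
      4 * (1 / ε + 1) ^ 2 ≤ (2 - q) * b ∧
      0 < 1 - 4 * a * b / ε ^ 2 - q ∧
      (64 * a ^ 2 / ε ^ 6) * (b + 1 + a * b ^ 2) ^ 2 * (1 + 4 * a / ε ^ 2) ^ 2
        < 4 * ((a / 2) * min (2 - q) b * (ε ^ 2 / 4) - q) * (1 - 4 * a * b / ε ^ 2 - q) := by
  intro ε hε
  have hε' : (0:ℝ) ≤ ε := hε.le
  obtain ⟨s, hsdef⟩ : ∃ s : ℝ, s = 1 + ε := ⟨1 + ε, rfl⟩
  have hs1 : (1:ℝ) ≤ s := by rw [hsdef]; linarith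
  have hs0 : (0:ℝ) < s := by linarith
  have hes : ε ≤ s := by rw [hsdef]; linarith
  obtain ⟨a, hadef⟩ : ∃ a : ℝ, a = ε ^ 12 / (2 ^ 20 * s ^ 14) := ⟨_, rfl⟩
  obtain ⟨q, hqdef⟩ : ∃ q : ℝ, q = a * ε ^ 2 / 16 := ⟨_, rfl⟩
  have ha0 : 0 < a := by rw [hadef]; positivity
  have hq0 : 0 < q := by rw [hqdef]; positivity
  have hp : ∀ n : ℕ, ε ^ n ≤ s ^ n := fun n => pow_le_pow_left₀ hε' hes n
  have hsp : ∀ n : ℕ, (1:ℝ) ≤ s ^ n := fun n => one_le_pow₀ hs1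
  have hb : 4 * (1 / ε + 1) ^ 2 = 4 * s ^ 2 / ε ^ 2 := by
    rw [hsdef]; field_simp
  -- q is small
  have hq_small : q ≤ 1 / 2 ^ 24 := by
    have heq : q = ε ^ 14 / (2 ^ 24 * s ^ 14) := by rw [hqdef, hadef]; field_simp; ring
    rw [heq, div_le_div_iff₀ (by positivity) (by positivity)]
    nlinarith [hp 14, pow_pos hs0 14]
  have hq1 : q ≤ 1 := by
    have : (1:ℝ) / 2 ^ 24 ≤ 1 := by norm_num
    linarith
  -- the D term
  have hXeq : 4 * a * (4 * s ^ 2 / ε ^ 2) / ε ^ 2 = ε ^ 8 / (2 ^ 16 * s ^ 12) := by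
    rw [hadef]; field_simp; ring
  have hX : ε ^ 8 / (2 ^ 16 * s ^ 12) ≤ 1 / 2 ^ 16 := by
    rw [div_le_div_iff₀ (by positivity) (by positivity)]
    have h12 : s ^ 8 ≤ s ^ 12 := pow_le_pow_right₀ hs1 (by norm_num)
    nlinarith [hp 8]
  have hD : (1:ℝ) / 2 ≤ 1 - 4 * a * (4 * s ^ 2 / ε ^ 2) / ε ^ 2 - q := by
    rw [hXeq]
    have : (1:ℝ)/2^16 + 1/2^24 ≤ 1/2 := by norm_num
    linarith
  refine ⟨a, 4 * (1 / ε + 1) ^ 2, q, ha0, by positivity, hq0, rfl, ?_, ?_, ?_⟩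
  · -- (i)
    have h := mul_nonneg (by linarith : (0:ℝ) ≤ 1 - q)
      (by positivity : (0:ℝ) ≤ 4 * (1 / ε + 1) ^ 2)
    nlinarith
  · -- (ii)
    rw [hb]; linarith
  · -- (iii)
    have hb4 : (4:ℝ) ≤ 4 * (1 / ε + 1) ^ 2 := by
      have h1 : (0:ℝ) < 1 / ε := by positivity
      nlinarith [sq_nonneg (1 / ε)]
    have hmin : min (2 - q) (4 * (1 / ε + 1) ^ 2) = 2 - q :=
      min_eq_left (by linarith)
    rw [hmin, hb]
    -- lower bound on inner RHS factor
    have hinner : a * ε ^ 2 / 16 ≤ a / 2 * (2 - q) * (ε ^ 2 / 4) - q := by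
      have heq : a / 2 * (2 - q) * (ε ^ 2 / 4) - q
          = a * ε ^ 2 * (2 - q) / 8 - a * ε ^ 2 / 16 := by rw [hqdef]; ring
      rw [heq]
      have h1 : a * ε ^ 2 * 1 ≤ a * ε ^ 2 * (2 - q) :=
        mul_le_mul_of_nonneg_left (by linarith) (by positivity)
      linarith
    have hinner0 : (0:ℝ) ≤ a * ε ^ 2 / 16 := by positivity
    have hprod : a * ε ^ 2 / 16 * (1 / 2)
        ≤ (a / 2 * (2 - q) * (ε ^ 2 / 4) - q) * (1 - 4 * a * (4 * s ^ 2 / ε ^ 2) / ε ^ 2 - q) :=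
      mul_le_mul hinner hD (by norm_num) (by linarith)
    -- upper bound on LHS
    have hab2eq : a * (4 * s ^ 2 / ε ^ 2) ^ 2 = ε ^ 8 / (2 ^ 16 * s ^ 10) := by
      rw [hadef]; field_simp; ring
    have hone : (1:ℝ) ≤ s ^ 2 / ε ^ 2 := by
      rw [le_div_iff₀ (by positivity)]
      nlinarith [hp 2]
    have hab2 : a * (4 * s ^ 2 / ε ^ 2) ^ 2 ≤ s ^ 2 / ε ^ 2 := by
      rw [hab2eq]
      have h1 : ε ^ 8 / (2 ^ 16 * s ^ 10) ≤ 1 := by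
        rw [div_le_one (by positivity)]
        have h10 : s ^ 8 ≤ s ^ 10 := pow_le_pow_right₀ hs1 (by norm_num)
        nlinarith [hp 8, pow_pos hs0 10]
      linarith
    have hsum : 4 * s ^ 2 / ε ^ 2 + 1 + a * (4 * s ^ 2 / ε ^ 2) ^ 2 ≤ 6 * (s ^ 2 / ε ^ 2) := by
      have h4 : 4 * s ^ 2 / ε ^ 2 = 4 * (s ^ 2 / ε ^ 2) := by ring
      linarith
    have hg : 1 + 4 * a / ε ^ 2 ≤ 2 := by
      have heq : 4 * a / ε ^ 2 = ε ^ 10 / (2 ^ 18 * s ^ 14) := by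
        rw [hadef]; field_simp; ring
      rw [heq]
      have h1 : ε ^ 10 / (2 ^ 18 * s ^ 14) ≤ 1 := by
        rw [div_le_one (by positivity)]
        have h14 : s ^ 10 ≤ s ^ 14 := pow_le_pow_right₀ hs1 (by norm_num)
        nlinarith [hp 10, pow_pos hs0 14]
      linarith
    have hL : 64 * a ^ 2 / ε ^ 6 * (4 * s ^ 2 / ε ^ 2 + 1 + a * (4 * s ^ 2 / ε ^ 2) ^ 2) ^ 2
          * (1 + 4 * a / ε ^ 2) ^ 2
        ≤ 64 * a ^ 2 / ε ^ 6 * (6 * (s ^ 2 / ε ^ 2)) ^ 2 * 2 ^ 2 := by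
      gcongr
    have hL2 : 64 * a ^ 2 / ε ^ 6 * (6 * (s ^ 2 / ε ^ 2)) ^ 2 * 2 ^ 2 < a * ε ^ 2 / 8 := by
      have heq2 : 64 * a ^ 2 / ε ^ 6 * (6 * (s ^ 2 / ε ^ 2)) ^ 2 * 2 ^ 2
          = 9216 * ε ^ 14 / (2 ^ 40 * s ^ 24) := by rw [hadef]; field_simp; ring
      have heq3 : a * ε ^ 2 / 8 = ε ^ 14 / (2 ^ 23 * s ^ 14) := by
        rw [hadef]; field_simp; ring
      rw [heq2, heq3, div_lt_div_iff₀ (by positivity) (by positivity)]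
      have hkey : (0:ℝ) ≤ (s ^ 10 - 1) * (ε ^ 14 * s ^ 14) :=
        mul_nonneg (by linarith [hsp 10]) (le_of_lt (mul_pos (pow_pos hε 14) (pow_pos hs0 14)))
      nlinarith [mul_pos (pow_pos hε 14) (pow_pos hs0 14)]
    linarith
end

section
/- Let n, p ≥ 1, let Π be a real symmetric positive definite n×n matrix, let h: ℝⁿ → ℝᵖ be any function, and let u: ℝⁿ × ℝᵖ → ℝⁿ be a function such that for every χ ∈ ℝⁿ and every y ∈ ℝᵖ with h(χ) ≠ y, and every x ∈ ℝⁿ with h(x) = y, one has (χ − x)ᵀ·Π·u(χ, y) < 0. Then the level sets of h are segment-convex: for all x_a, x_b ∈ ℝⁿ with h(x_a) = h(x_b) and all s ∈ [0, 1], h(s·x_a + (1 − s)·x_b) = h(x_a). -/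
open Matrix

/-- If the correction term `u(χ, y)` of an observer strictly decreases the `Π`-quadratic
distance to every state `x` consistent with the output `y` (whenever `h(χ) ≠ y`), then the
level sets of `h` are segment-convex. -/
theorem stmt_15 {n p : ℕ} (hn : 1 ≤ n) (hp : 1 ≤ p)
    (Pmat : Matrix (Fin n) (Fin n) ℝ) (hPsym : Pmat.IsSymm) (hP : Pmat.PosDef)
    (h : (Fin n → ℝ) → (Fin p → ℝ))
    (u : (Fin n → ℝ) → (Fin p → ℝ) → (Fin n → ℝ))
    (hu : ∀ (χ : Fin n → ℝ) (y : Fin p → ℝ), h χ ≠ y →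
      ∀ x : Fin n → ℝ, h x = y → (χ - x) ⬝ᵥ Pmat.mulVec (u χ y) < 0) :
    ∀ xa xb : Fin n → ℝ, h xa = h xb →
      ∀ s : ℝ, s ∈ Set.Icc (0 : ℝ) 1 → h (s • xa + (1 - s) • xb) = h xa := by
  intro xa xb hab s hs
  by_contra hne
  set χ := s • xa + (1 - s) • xb with hχ
  have h1 := hu χ (h xa) hne xa rfl
  have h2 := hu χ (h xa) hne xb hab.symm
  have e1 : χ - xa = (1 - s) • (xb - xa) := by
    rw [hχ]; module
  have e2 : χ - xb = (-s) • (xb - xa) := by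
    rw [hχ]; module
  rw [e1, smul_dotProduct, smul_eq_mul] at h1
  rw [e2, smul_dotProduct, smul_eq_mul] at h2
  set c := (xb - xa) ⬝ᵥ Pmat.mulVec (u χ (h xa)) with hc
  obtain ⟨h0, h1'⟩ := hs
  rcases lt_trichotomy c 0 with hc0 | hc0 | hc0
  · nlinarith
  · simp [hc0] at h1
  · nlinarith
end

section
/- Let n ≥ 1 and let h: ℝⁿ → ℝ be continuously differentiable with ∇h(x) ≠ 0 for every x ∈ ℝⁿ. Assume property H3: for all x_a, x_b ∈ ℝⁿ with h(x_a) = h(x_b) and all s ∈ [0, 1], h(s·x_a + (1 − s)·x_b) = h(x_a). Then for every real Q > 0 and all χ, x ∈ ℝⁿ with h(χ) ≠ h(x), one has ⟨∇h(χ), χ − x⟩·Q·(h(χ) − h(x)) > 0. -/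
/-!
Suppose `h x < h χ` and let `φ = Dh(χ) ≠ 0`. Pick `y` with `h y > h χ` and `φ (y - χ) > 0`. By the
intermediate value theorem some `P = a • x + b • y` on the segment `[x, y]` lies on the level set of
`χ`, with `b > 0` because `h x ≠ h χ`. That level set is convex, so `h` is constant on `[χ, P]` and
hence `φ (P - χ) = 0`, i.e. `a φ (x - χ) = -b φ (y - χ) < 0`; thus `φ (χ - x) > 0`. The case
`h x > h χ` follows by applying this to `-h`.
-/

open Set

variable {E F : Type*} [NormedAddCommGroup E] [NormedSpace ℝ E]
  [NormedAddCommGroup F] [NormedSpace ℝ F]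

theorem HasFDerivAt.apply_sub_eq_zero_of_segment_subset {f : E → F} {f' : E →L[ℝ] F} {a b : E}
    (hf : HasFDerivAt f f' a) (hseg : segment ℝ a b ⊆ f ⁻¹' {f a}) : f' (b - a) = 0 := by
  let γ : ℝ → E := AffineMap.lineMap a b
  have hline : HasDerivWithinAt (f ∘ γ) (f' (b - a)) (Icc 0 1) 0 := by
    refine HasFDerivAt.comp_hasDerivWithinAt (0 : ℝ) ?_ AffineMap.hasDerivWithinAt_lineMap
    simpa [γ] using hf
  have hconst : HasDerivWithinAt (f ∘ γ) 0 (Icc 0 1) 0 :=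
    (hasDerivWithinAt_const _ _ (f a)).congr
      (fun t ht => hseg (lineMap_mem_segment ℝ a b ht)) (by simp [γ])
  exact (uniqueDiffOn_Icc_zero_one 0 ⟨le_rfl, zero_le_one⟩).eq_deriv _ hline hconst

theorem HasFDerivAt.exists_lt_apply_sub_pos {f : E → ℝ} {f' : E →L[ℝ] ℝ} {a : E}
    (hf : HasFDerivAt f f' a) (hf' : f' ≠ 0) : ∃ y, f a < f y ∧ 0 < f' (y - a) := by
  obtain ⟨v, hv⟩ : ∃ v, 0 < f' v := by
    obtain ⟨w, hw⟩ := DFunLike.ne_iff.1 hf'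
    rcases hw.lt_or_gt with hneg | hpos
    · exact ⟨-w, by simpa using hneg⟩
    · exact ⟨w, hpos⟩
  have hray : HasDerivAt (fun t : ℝ => f (a + t • v)) (f' v) 0 := by
    refine HasFDerivAt.comp_hasDerivAt (0 : ℝ) ?_ ?_
    · simpa using hf
    · simpa using ((hasDerivAt_id (0 : ℝ)).smul_const v).const_add a
  obtain ⟨t, hslope, ht⟩ :=
    ((hray.tendsto_slope_zero_right.eventually (lt_mem_nhds hv)).and self_mem_nhdsWithin).exists
  refine ⟨a + t • v, ?_, by simpa using mul_pos ht hv⟩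
  simp only [zero_add, zero_smul, add_zero, smul_eq_mul] at hslope
  exact sub_pos.1 (pos_of_mul_pos_right hslope (inv_pos.2 ht).le)

theorem HasFDerivAt.apply_sub_pos_of_convex_preimage {f : E → ℝ} {f' : E →L[ℝ] ℝ} {x χ : E}
    (hf : HasFDerivAt f f' χ) (hf' : f' ≠ 0) (hcont : Continuous f)
    (hconv : Convex ℝ (f ⁻¹' {f χ})) (hlt : f x < f χ) : 0 < f' (χ - x) := by
  obtain ⟨y, hy, hy'⟩ := hf.exists_lt_apply_sub_pos hf'
  obtain ⟨P, hP, hPχ⟩ := (convex_segment x y).isPreconnected.intermediate_value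
    (left_mem_segment ℝ x y) (right_mem_segment ℝ x y) hcont.continuousOn ⟨hlt.le, hy.le⟩
  obtain ⟨a, b, ha, hb, hab, rfl⟩ := hP
  have hb_pos : 0 < b := by
    refine hb.lt_of_ne fun hb0 => hlt.ne ?_
    rw [← hb0, add_zero] at hab
    simpa [← hb0, hab] using hPχ
  have hflat : f' (a • x + b • y - χ) = 0 :=
    hf.apply_sub_eq_zero_of_segment_subset (hconv.segment_subset rfl hPχ)
  have hsplit : a • x + b • y - χ = a • (x - χ) + b • (y - χ) := by
    conv_lhs => rw [← one_smul ℝ χ, ← hab, add_smul]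
    rw [smul_sub, smul_sub]
    abel
  rw [hsplit, map_add, map_smul, map_smul, smul_eq_mul, smul_eq_mul] at hflat
  have hxχ : f' (x - χ) < 0 := by
    by_contra! hge
    nlinarith [mul_nonneg ha hge, mul_pos hb_pos hy']
  rw [← neg_sub, map_neg]
  exact neg_pos.2 hxχ

theorem HasFDerivAt.apply_sub_mul_sub_pos_of_convex_preimage {f : E → ℝ} {f' : E →L[ℝ] ℝ}
    {x χ : E} (hf : HasFDerivAt f f' χ) (hf' : f' ≠ 0) (hcont : Continuous f)
    (hconv : Convex ℝ (f ⁻¹' {f χ})) (hne : f χ ≠ f x) : 0 < f' (χ - x) * (f χ - f x) := by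
  rcases hne.lt_or_gt with hlt | hgt
  · have hconv' : Convex ℝ ((fun y => -f y) ⁻¹' {-f χ}) := by
      simpa only [preimage, mem_singleton_iff, neg_inj] using hconv
    have hpos := hf.neg.apply_sub_pos_of_convex_preimage (neg_ne_zero.2 hf') hcont.neg hconv'
      (neg_lt_neg hlt)
    rw [neg_apply, neg_pos] at hpos
    exact mul_pos_of_neg_of_neg hpos (sub_neg.2 hlt)
  · exact mul_pos (hf.apply_sub_pos_of_convex_preimage hf' hcont hconv hgt) (sub_pos.2 hgt)

theorem stmt_16_general {n : ℕ}
    (h : (Fin n → ℝ) → ℝ) (hh : ContDiff ℝ 1 h)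
    (hgrad : ∀ x : Fin n → ℝ, fderiv ℝ h x ≠ 0)
    (hH3 : ∀ xa xb : Fin n → ℝ, h xa = h xb →
      ∀ s ∈ Set.Icc (0 : ℝ) 1, h (s • xa + (1 - s) • xb) = h xa) :
    ∀ Q : ℝ, 0 < Q → ∀ χ x : Fin n → ℝ, h χ ≠ h x →
      0 < fderiv ℝ h χ (χ - x) * Q * (h χ - h x) := by
  intro Q hQ χ x hne
  have hdiff : Differentiable ℝ h := hh.differentiable one_ne_zero
  have hconv : Convex ℝ (h ⁻¹' {h χ}) := by
    intro xa hxa xb hxb s t hs ht hst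
    obtain rfl : t = 1 - s := eq_sub_of_add_eq' hst
    have hlevel := hH3 xa xb (hxa.trans hxb.symm) s ⟨hs, by linarith⟩
    exact hlevel.trans hxa
  rw [mul_right_comm]
  exact mul_pos ((hdiff χ).hasFDerivAt.apply_sub_mul_sub_pos_of_convex_preimage (hgrad χ)
    hh.continuous hconv hne) hQ

/-- If `h : ℝⁿ → ℝ` is continuously differentiable with nowhere-vanishing gradient and its
level sets are segment-convex (property H3), then for every `Q > 0` and all `χ, x` with
`h(χ) ≠ h(x)`, one has `⟨∇h(χ), χ − x⟩·Q·(h(χ) − h(x)) > 0`. -/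
theorem stmt_16 {n : ℕ} (hn : 1 ≤ n)
    (h : (Fin n → ℝ) → ℝ) (hh : ContDiff ℝ 1 h)
    (hgrad : ∀ x : Fin n → ℝ, fderiv ℝ h x ≠ 0)
    (hH3 : ∀ xa xb : Fin n → ℝ, h xa = h xb →
      ∀ s ∈ Set.Icc (0 : ℝ) 1, h (s • xa + (1 - s) • xb) = h xa) :
    ∀ Q : ℝ, 0 < Q → ∀ χ x : Fin n → ℝ, h χ ≠ h x →
      0 < fderiv ℝ h χ (χ - x) * Q * (h χ - h x) :=
  stmt_16_general h hh hgrad hH3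
end
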